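/- arXiv:1908.11698 — 3 statements merged into one kernel-verified Lean document; each statement's English description precedes it below -/
import Mathlib

section
/- Differentiation of the arctangent Abel kernel: let 0 < E₀ and let g be continuous on [E₀, E₁] for some E₁ > E₀. Then the function G(E) = ∫_{E₀}^{E} arctan(√((E−u)/u)) · g(u) du is differentiable on (E₀, E₁) with G′(E) = (1/(2E)) ∫_{E₀}^{E} √(u/(E−u)) · g(u) du. -/
/-!
Write `K(t, u) = √(u / (t - u)) / (2t)` for the `t`-derivative of `arctan √((t - u) / u)`; it is
nonnegative, so `arctan √((e - u) / u) = ∫_u^e K(t, u) dt ≤ π / 2` and `K g` is integrable on the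
square. Fubini then gives `G(e) = ∫_a^e H(t) dt` with `H(t) = ∫_a^t K(t, u) g(u) du`, and the claim
is the fundamental theorem of calculus at `E`, where `H(E)` is the stated value. Continuity of `H`
comes from the substitution `u = a + (t - a) s`, which moves the singularity `(t - u)^(-1/2)` into
the fixed integrable weight `(1 - s)^(-1/2)` on `[0, 1]`, followed by dominated convergence.
-/

open Set MeasureTheory Real Filter Topology

theorem intervalIntegrable_inv_sqrt_sub (a c : ℝ) :
    IntervalIntegrable (fun s => (√(c - s))⁻¹) volume a c := by
  refine intervalIntegral.intervalIntegrable_deriv_of_nonneg (g := fun s => -2 * √(c - s))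
    (by fun_prop) (fun s hs => ?_) (fun s _ => inv_nonneg.2 (sqrt_nonneg _))
  have hcs : c - s ≠ 0 := sub_ne_zero.2 fun h => by subst h; simp at hs; linarith
  exact ((((hasDerivAt_id' s).const_sub c).sqrt hcs).const_mul (-2)).congr_deriv (by ring)

theorem continuous_intervalIntegral_mul {X : Type*} [TopologicalSpace X] [LocallyCompactSpace X]
    [FirstCountableTopology X] {w : ℝ → ℝ} {φ : X → ℝ → ℝ} {a b : ℝ}
    (hw : IntervalIntegrable w volume a b) (hφ : Continuous (Function.uncurry φ)) :
    Continuous fun x => ∫ s in a..b, w s * φ x s := by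
  refine continuous_iff_continuousAt.2 fun x₀ => ?_
  obtain ⟨K, hK, hKx₀⟩ := exists_compact_mem_nhds x₀
  obtain ⟨C, hC⟩ := (hK.prod isCompact_uIcc).exists_bound_of_continuousOn hφ.continuousOn
  refine intervalIntegral.continuousAt_of_dominated_interval (bound := fun s => ‖w s‖ * C)
    (Eventually.of_forall fun x => hw.def'.aestronglyMeasurable.mul
      (hφ.comp (continuous_const.prodMk continuous_id)).aestronglyMeasurable)
    ?_ (hw.norm.mul_const C) (ae_of_all _ fun s _ =>
      (continuous_const.mul (hφ.comp (continuous_id.prodMk continuous_const))).continuousAt)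
  filter_upwards [hKx₀] with x hx
  refine ae_of_all _ fun s hs => ?_
  rw [norm_mul]
  exact mul_le_mul_of_nonneg_left (hC (x, s) ⟨hx, uIoc_subset_uIcc hs⟩) (norm_nonneg _)

/-- `∂ₜ arctan √((t - u) / u)` for `0 < u < t`; the conventions `√x = 0` for `x ≤ 0` and `x / 0 = 0`
make it vanish for `t ≤ u`, which cuts all the integrals below at `u = t`. -/
noncomputable def abelKernel (t u : ℝ) : ℝ := √(u / (t - u)) / (2 * t)

noncomputable def abelIntegral (g : ℝ → ℝ) (a t : ℝ) : ℝ := ∫ u in a..t, abelKernel t u * g u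

theorem abelKernel_of_le {t u : ℝ} (hu : 0 ≤ u) (h : t ≤ u) : abelKernel t u = 0 := by
  rw [abelKernel, sqrt_eq_zero'.2 (div_nonpos_of_nonneg_of_nonpos hu (by linarith)), zero_div]

theorem abelKernel_nonneg {t u : ℝ} (hu : 0 ≤ u) : 0 ≤ abelKernel t u := by
  rcases le_or_gt t u with h | h
  · rw [abelKernel_of_le hu h]
  · exact div_nonneg (sqrt_nonneg _) (by linarith)

theorem measurable_abelKernel : Measurable (Function.uncurry abelKernel) := by
  unfold Function.uncurry abelKernel
  fun_prop

theorem hasDerivAt_arctan_sqrt_sub_div {t u : ℝ} (hu : 0 < u) (ht : u < t) :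
    HasDerivAt (fun e => arctan √((e - u) / u)) (abelKernel t u) t := by
  have hx : 0 < (t - u) / u := div_pos (by linarith) hu
  have h := ((((hasDerivAt_id' t).sub_const u).div_const u).sqrt hx.ne').arctan
  convert h using 1
  rw [abelKernel, sq_sqrt hx.le, ← inv_div (t - u), sqrt_inv]
  field_simp
  ring

theorem continuous_arctan_sqrt_sub_div (u : ℝ) : Continuous fun e => arctan √((e - u) / u) := by
  fun_prop

theorem integrableOn_abelKernel {u : ℝ} (hu : 0 < u) (a e : ℝ) :
    IntegrableOn (fun t => abelKernel t u) (Ioc a e) := by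
  have hde : IntegrableOn (fun t => abelKernel t u) (Ioc u e) :=
    intervalIntegral.integrableOn_deriv_of_nonneg
      (continuous_arctan_sqrt_sub_div u).continuousOn
      (fun t ht => hasDerivAt_arctan_sqrt_sub_div hu ht.1) (fun _ _ => abelKernel_nonneg hu.le)
  exact hde.of_forall_sdiff_eq_zero measurableSet_Ioc
    fun t ht => abelKernel_of_le hu.le (not_lt.1 fun htu => ht.2 ⟨htu, ht.1.2⟩)

theorem setIntegral_abelKernel {a u : ℝ} (hu : 0 < u) (ha : a ≤ u) (e : ℝ) :
    ∫ t in Ioc a e, abelKernel t u = arctan √((e - u) / u) := by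
  rw [setIntegral_eq_of_subset_of_forall_sdiff_eq_zero measurableSet_Ioc (Ioc_subset_Ioc_left ha)
    fun t ht => abelKernel_of_le hu.le (not_lt.1 fun htu => ht.2 ⟨htu, ht.1.2⟩)]
  rcases le_or_gt e u with he | he
  · rw [Ioc_eq_empty (not_lt.2 he), setIntegral_empty,
      sqrt_eq_zero'.2 (div_nonpos_of_nonpos_of_nonneg (by linarith) hu.le), arctan_zero]
  · rw [← intervalIntegral.integral_of_le he.le,
      intervalIntegral.integral_eq_sub_of_hasDeriv_right_of_le he.le
        (continuous_arctan_sqrt_sub_div u).continuousOn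
        (fun t ht => (hasDerivAt_arctan_sqrt_sub_div hu ht.1).hasDerivWithinAt)
        ((intervalIntegrable_iff_integrableOn_Ioc_of_le he.le).2 (integrableOn_abelKernel hu u e))]
    simp

theorem integrable_abelKernel_mul_prod {a e : ℝ} {g : ℝ → ℝ} (ha : 0 ≤ a)
    (hg : IntegrableOn g (Ioc a e)) :
    Integrable (Function.uncurry fun u t => abelKernel t u * g u)
      ((volume.restrict (Ioc a e)).prod (volume.restrict (Ioc a e))) := by
  have hmeas : AEStronglyMeasurable (Function.uncurry fun u t => abelKernel t u * g u)
      ((volume.restrict (Ioc a e)).prod (volume.restrict (Ioc a e))) :=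
    (measurable_abelKernel.comp measurable_swap).aestronglyMeasurable.mul
      hg.aestronglyMeasurable.comp_fst
  refine (integrable_prod_iff hmeas).2 ⟨?_, ?_⟩
  · filter_upwards [ae_restrict_mem measurableSet_Ioc] with u hu
    exact (integrableOn_abelKernel (ha.trans_lt hu.1) a e).mul_const (g u)
  · refine (hg.norm.const_mul (π / 2)).mono' hmeas.norm.integral_prod_right' ?_
    filter_upwards [ae_restrict_mem measurableSet_Ioc] with u hu
    have hu0 : 0 < u := ha.trans_lt hu.1
    simp only [Function.uncurry_apply_pair, norm_mul,
      Real.norm_of_nonneg (abelKernel_nonneg hu0.le), integral_mul_const,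
      setIntegral_abelKernel hu0 hu.1.le]
    rw [norm_norm, Real.norm_of_nonneg (arctan_nonneg.2 (sqrt_nonneg _))]
    exact mul_le_mul_of_nonneg_right (arctan_lt_pi_div_two _).le (norm_nonneg _)

theorem integral_arctan_sqrt_mul_eq_integral_abelIntegral {a e : ℝ} {g : ℝ → ℝ} (ha : 0 ≤ a)
    (hae : a ≤ e) (hg : IntegrableOn g (Ioc a e)) :
    ∫ u in a..e, arctan √((e - u) / u) * g u = ∫ t in a..e, abelIntegral g a t := by
  simp only [intervalIntegral.integral_of_le hae, abelIntegral]
  calc ∫ u in Ioc a e, arctan √((e - u) / u) * g u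
      = ∫ u in Ioc a e, ∫ t in Ioc a e, abelKernel t u * g u := by
        refine setIntegral_congr_fun measurableSet_Ioc fun u hu => ?_
        rw [integral_mul_const, setIntegral_abelKernel (ha.trans_lt hu.1) hu.1.le]
    _ = ∫ t in Ioc a e, ∫ u in Ioc a e, abelKernel t u * g u :=
        integral_integral_swap (integrable_abelKernel_mul_prod ha hg)
    _ = ∫ t in Ioc a e, ∫ u in a..t, abelKernel t u * g u := by
        refine setIntegral_congr_fun measurableSet_Ioc fun t ht => ?_
        rw [intervalIntegral.integral_of_le ht.1.le,
          setIntegral_eq_of_subset_of_forall_sdiff_eq_zero measurableSet_Ioc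
            (Ioc_subset_Ioc_right ht.2) fun u hu => ?_]
        rw [abelKernel_of_le (ha.trans hu.1.1.le) (not_lt.1 fun hut => hu.2 ⟨hu.1.1, hut.le⟩),
          zero_mul]

theorem abelIntegral_eq_mul_integral_unitInterval {a t : ℝ} (g : ℝ → ℝ) (ha : 0 ≤ a)
    (ht : a ≤ t) :
    abelIntegral g a t = √(t - a) / (2 * t) *
      ∫ s in (0 : ℝ)..1, (√(1 - s))⁻¹ * (√((t - a) * s + a) * g ((t - a) * s + a)) := by
  have hsub := intervalIntegral.smul_integral_comp_mul_add (a := 0) (b := 1)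
    (fun u => abelKernel t u * g u) (t - a) a
  simp only [mul_zero, zero_add, mul_one, sub_add_cancel, smul_eq_mul] at hsub
  rw [abelIntegral, ← hsub, ← intervalIntegral.integral_const_mul,
    ← intervalIntegral.integral_const_mul]
  refine intervalIntegral.integral_congr fun s hs => ?_
  rw [uIcc_of_le zero_le_one] at hs
  have hu : 0 ≤ (t - a) * s + a := by nlinarith [hs.1]
  have hdiv : (t - a) / √(t - a) = √(t - a) := div_sqrt
  rw [abelKernel, show t - ((t - a) * s + a) = (t - a) * (1 - s) by ring, sqrt_div hu,
    sqrt_mul (by linarith)]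
  calc _ = (t - a) / √(t - a) * ((√(1 - s))⁻¹ * (√((t - a) * s + a) * g ((t - a) * s + a)))
        / (2 * t) := by ring
    _ = _ := by rw [hdiv]; ring

theorem continuousOn_abelIntegral {a : ℝ} {g : ℝ → ℝ} (ha : 0 < a) (hg : Continuous g) :
    ContinuousOn (abelIntegral g a) (Ici a) := by
  have hint : Continuous fun t =>
      ∫ s in (0 : ℝ)..1, (√(1 - s))⁻¹ * (√((t - a) * s + a) * g ((t - a) * s + a)) :=
    continuous_intervalIntegral_mul (intervalIntegrable_inv_sqrt_sub 0 1) (by fun_prop)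
  refine ContinuousOn.congr (fun t ht => ?_) fun t ht =>
    abelIntegral_eq_mul_integral_unitInterval g ha.le ht
  have ht0 : 2 * t ≠ 0 := by linarith [mem_Ici.1 ht]
  exact ((by fun_prop : Continuous fun t => √(t - a)).continuousWithinAt.div
    (continuous_const.mul continuous_id).continuousWithinAt ht0).mul hint.continuousWithinAt

theorem hasDerivAt_integral_arctan_sqrt_mul {a E : ℝ} {g : ℝ → ℝ} (ha : 0 < a) (haE : a < E)
    (hg : Continuous g) :
    HasDerivAt (fun e => ∫ u in a..e, arctan √((e - u) / u) * g u)
      ((1 / (2 * E)) * ∫ u in a..E, √(u / (E - u)) * g u) E := by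
  have hH := continuousOn_abelIntegral ha hg
  have hG : (fun e => ∫ u in a..e, arctan √((e - u) / u) * g u) =ᶠ[𝓝 E]
      fun e => ∫ t in a..e, abelIntegral g a t := by
    filter_upwards [Ioi_mem_nhds haE] with e he
    exact integral_arctan_sqrt_mul_eq_integral_abelIntegral ha.le he.le hg.integrableOn_Ioc
  have hHE : abelIntegral g a E = (1 / (2 * E)) * ∫ u in a..E, √(u / (E - u)) * g u := by
    rw [abelIntegral, ← intervalIntegral.integral_const_mul]
    congr 1 with u
    rw [abelKernel]
    ring
  rw [← hHE]
  refine (intervalIntegral.integral_hasDerivAt_right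
    (hH.mono (uIcc_of_le haE.le ▸ Icc_subset_Ici_self)).intervalIntegrable
    ((hH.mono Ioi_subset_Ici_self).stronglyMeasurableAtFilter isOpen_Ioi E haE)
    (hH.continuousAt (Ici_mem_nhds haE))).congr_of_eventuallyEq hG

/-- Differentiation of the arctangent Abel kernel:
`G(E) = ∫_{E₀}^E arctan(√((E−u)/u)) g(u) du` has
`G′(E) = (1/(2E)) ∫_{E₀}^E √(u/(E−u)) g(u) du`. -/
theorem deriv_arctan_abel_kernel (E₀ E₁ : ℝ) (hE₀ : 0 < E₀) (hE : E₀ < E₁)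
    (g : ℝ → ℝ) (hg : ContinuousOn g (Icc E₀ E₁)) :
    ∀ E ∈ Ioo E₀ E₁,
      HasDerivAt (fun e => ∫ u in E₀..e, Real.arctan (Real.sqrt ((e - u) / u)) * g u)
        ((1/(2*E)) * ∫ u in E₀..E, Real.sqrt (u / (E - u)) * g u) E := by
  intro E hE'
  set g' := IccExtend hE.le ((Icc E₀ E₁).domRestrict g)
  have hg' : Continuous g' := hg.domRestrict.Icc_extend'
  have hgg' : EqOn g g' (Icc E₀ E₁) := fun u hu =>
    (IccExtend_of_mem hE.le ((Icc E₀ E₁).domRestrict g) hu).symm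
  have hcongr : ∀ e ∈ Icc E₀ E₁, ∀ k : ℝ → ℝ,
      ∫ u in E₀..e, k u * g u = ∫ u in E₀..e, k u * g' u :=
    fun e he k => intervalIntegral.integral_congr fun u hu =>
      congrArg (k u * ·) (hgg' (uIcc_subset_Icc (left_mem_Icc.2 hE.le) he hu))
  rw [hcongr E (Ioo_subset_Icc_self hE')]
  refine (hasDerivAt_integral_arctan_sqrt_mul hE₀ hE'.1 hg').congr_of_eventuallyEq ?_
  filter_upwards [Ioo_mem_nhds hE'.1 hE'.2] with e he
  exact hcongr e (Ioo_subset_Icc_self he) _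
end

section
/- Collapse of the double integral I₄: let 0 < E₀ < E and let Ψ be continuous on [E₀, E]. Then 24 ∫_{E₀}^{E} (E−u)^{−1/2} ( ∫_{E₀}^{u} v^{−1} arctan(√((u−v)/v)) Ψ(v) dv ) du = 24π ∫_{E₀}^{E} ( √E/√v − 1 ) Ψ(v) v^{−1/2} dv, where all integrals converge absolutely. -/
/-!
Swapping the order of integration over the triangle `E₀ ≤ v ≤ u ≤ E` (Fubini: the singular
factor `(E - u)^(-1/2)` is integrable and the rest of the integrand is bounded) reduces the claim
to the kernel identity `∫_v^E arctan √((u - v)/v) (E - u)^(-1/2) du = π (√E - √v)`.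
The substitution `u = v + (E - v) sin² θ` turns the kernel into
`2 √(E - v) ∫_0^{π/2} arctan (c sin θ) sin θ dθ` with `c = √((E - v)/v)`, and an integration by
parts reduces this to the elementary integral `∫_0^{π/2} dθ / (1 + c² sin² θ) = π / (2 √(1 + c²))`.
-/

open Set MeasureTheory Real Function

theorem one_add_mul_sin_sq_pos {a : ℝ} (ha : -1 < a) (θ : ℝ) : 0 < 1 + a * sin θ ^ 2 := by
  nlinarith [sin_sq_le_one θ, mul_nonneg (sq_nonneg (sin θ)) (by linarith : (0:ℝ) ≤ a + 1)]

-- The antiderivative is `arctan (k tan θ) / k`, rewritten by the arctan addition formula so that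
-- it stays smooth across `θ = π / 2`.
theorem hasDerivAt_add_arctan_div {k : ℝ} (hk : 0 < k) (θ : ℝ) :
    HasDerivAt (fun θ => (θ + arctan ((k - 1) * sin θ * cos θ / (1 + (k - 1) * sin θ ^ 2))) / k)
      (1 + (k ^ 2 - 1) * sin θ ^ 2)⁻¹ θ := by
  set W := 1 + (k ^ 2 - 1) * sin θ ^ 2
  set N := (k - 1) * sin θ * cos θ
  set D := 1 + (k - 1) * sin θ ^ 2
  have hW : 0 < W := one_add_mul_sin_sq_pos (by nlinarith) θ
  have hD : 0 < D := one_add_mul_sin_sq_pos (by linarith) θ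
  have hcos : cos θ ^ 2 = 1 - sin θ ^ 2 := by rw [← sin_sq_add_cos_sq θ]; ring
  have hq : HasDerivAt (fun θ => (k - 1) * sin θ * cos θ / (1 + (k - 1) * sin θ ^ 2))
      (((k - 1) * (cos θ ^ 2 - sin θ ^ 2) * D - N * ((k - 1) * (2 * sin θ * cos θ))) / D ^ 2) θ :=
    (((hasDerivAt_sin θ).const_mul _).mul (hasDerivAt_cos θ)).congr_deriv (by ring) |>.div
      (((((hasDerivAt_sin θ).pow 2).const_mul _).const_add 1).congr_deriv (by ring)) hD.ne'
  have hnum : (k - 1) * (cos θ ^ 2 - sin θ ^ 2) * D - N * ((k - 1) * (2 * sin θ * cos θ))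
      = k - W := by
    linear_combination (k - 1) * (1 - (k - 1) * sin θ ^ 2) * hcos
  have hden : D ^ 2 + N ^ 2 = W := by
    linear_combination (k - 1) ^ 2 * sin θ ^ 2 * hcos
  refine (((hasDerivAt_id θ).add ((hasDerivAt_arctan _).comp θ hq)).div_const k).congr_deriv ?_
  have hsq : 1 + (N / D) ^ 2 = W / D ^ 2 := by rw [← hden]; field_simp
  rw [hnum]
  change (1 + 1 / (1 + (N / D) ^ 2) * ((k - W) / D ^ 2)) / k = W⁻¹
  rw [hsq]
  field_simp
  ring

theorem integral_inv_one_add_mul_sin_sq {a : ℝ} (ha : -1 < a) :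
    ∫ θ in (0)..(π / 2), (1 + a * sin θ ^ 2)⁻¹ = π / (2 * √(1 + a)) := by
  obtain ⟨k, hk, rfl⟩ : ∃ k, 0 < k ∧ a = k ^ 2 - 1 :=
    ⟨√(1 + a), sqrt_pos.2 (by linarith), by rw [sq_sqrt (by linarith)]; ring⟩
  have hcont : Continuous fun θ => (1 + (k ^ 2 - 1) * sin θ ^ 2)⁻¹ :=
    Continuous.inv₀ (by fun_prop) fun θ => (one_add_mul_sin_sq_pos ha θ).ne'
  rw [intervalIntegral.integral_eq_sub_of_hasDerivAt (fun θ _ => hasDerivAt_add_arctan_div hk θ)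
    (hcont.intervalIntegrable _ _), add_sub_cancel, sqrt_sq hk.le]
  simp only [sin_pi_div_two, cos_pi_div_two, sin_zero, cos_zero, mul_one, mul_zero, zero_div,
    arctan_zero, add_zero, sub_zero]
  field_simp

theorem mul_integral_cos_sq_div_one_add_mul_sin_sq {a : ℝ} (ha : -1 < a) :
    a * ∫ θ in (0)..(π / 2), cos θ ^ 2 / (1 + a * sin θ ^ 2) = π / 2 * (√(1 + a) - 1) := by
  have hpos := one_add_mul_sin_sq_pos ha
  have hcont : Continuous fun θ => (1 + a * sin θ ^ 2)⁻¹ :=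
    Continuous.inv₀ (by fun_prop) fun θ => (hpos θ).ne'
  have hsplit : ∀ θ, a * (cos θ ^ 2 / (1 + a * sin θ ^ 2))
      = (1 + a) * (1 + a * sin θ ^ 2)⁻¹ - 1 := fun θ => by
    have := (hpos θ).ne'
    field_simp
    linear_combination a * sin_sq_add_cos_sq θ
  rw [← intervalIntegral.integral_const_mul, funext hsplit, intervalIntegral.integral_sub
    ((hcont.intervalIntegrable _ _).const_mul _) intervalIntegrable_const,
    intervalIntegral.integral_const_mul, integral_inv_one_add_mul_sin_sq ha,
    intervalIntegral.integral_const, sub_zero, smul_eq_mul, mul_one]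
  have hk : 0 < √(1 + a) := sqrt_pos.2 (by linarith)
  field_simp
  linear_combination -sq_sqrt (by linarith : 0 ≤ 1 + a)

theorem integral_arctan_mul_sin_mul_sin (c : ℝ) :
    ∫ θ in (0)..(π / 2), arctan (c * sin θ) * sin θ = π * c / (2 * (1 + √(1 + c ^ 2))) := by
  have hparts := intervalIntegral.integral_mul_deriv_eq_deriv_mul (a := 0) (b := π / 2)
    (u := fun θ => arctan (c * sin θ)) (v := fun θ => -cos θ)
    (u' := fun θ => 1 / (1 + (c * sin θ) ^ 2) * (c * cos θ)) (v' := sin)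
    (fun θ _ => ((hasDerivAt_sin θ).const_mul c).arctan)
    (fun θ _ => (hasDerivAt_cos θ).neg.congr_deriv (neg_neg _))
    ((Continuous.mul (Continuous.div continuous_const (by fun_prop) fun θ => by positivity)
      (by fun_prop)).intervalIntegrable _ _)
    (continuous_sin.intervalIntegrable _ _)
  have hcos : ∀ θ, 1 / (1 + (c * sin θ) ^ 2) * (c * cos θ) * -cos θ
      = -(c * (cos θ ^ 2 / (1 + c ^ 2 * sin θ ^ 2))) := fun θ => by ring
  simp only [hcos, intervalIntegral.integral_neg, intervalIntegral.integral_const_mul] at hparts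
  simp only [cos_pi_div_two, cos_zero, sin_zero, mul_zero, arctan_zero] at hparts
  have hJ := mul_integral_cos_sq_div_one_add_mul_sin_sq (neg_one_lt_zero.trans_le (sq_nonneg c))
  have hk : 0 < √(1 + c ^ 2) := sqrt_pos.2 (by positivity)
  have hk2 := sq_sqrt (by positivity : (0:ℝ) ≤ 1 + c ^ 2)
  rw [hparts]
  rcases eq_or_ne c 0 with rfl | hc
  · simp
  rw [eq_div_iff (by positivity)]
  refine mul_left_cancel₀ hc ?_
  linear_combination 2 * (1 + √(1 + c ^ 2)) * hJ + π * hk2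

theorem integral_arctan_sqrt_div_sqrt_sub_eq_integral_arctan_mul_sin_mul_sin {v E : ℝ}
    (hv : 0 < v) (hvE : v < E) :
    ∫ u in v..E, arctan (√((u - v) / v)) / √(E - u)
      = 2 * √(E - v) * ∫ θ in (0)..(π / 2), arctan (√((E - v) / v) * sin θ) * sin θ := by
  have hsubst := integral_Icc_deriv_smul_of_deriv_nonneg (a := 0) (b := π / 2)
    (f := fun θ => v + (E - v) * sin θ ^ 2) (f' := fun θ => (E - v) * (2 * sin θ * cos θ))
    (g := fun u => arctan (√((u - v) / v)) / √(E - u)) (by fun_prop)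
    (fun θ _ => (((hasDerivAt_sin θ).pow 2).const_mul _ |>.const_add v).congr_deriv (by ring))
    (fun θ hθ => mul_nonneg (by linarith) (mul_nonneg (mul_nonneg zero_le_two
      (sin_nonneg_of_nonneg_of_le_pi hθ.1.le (by linarith [hθ.2, pi_pos])))
      (cos_nonneg_of_mem_Icc ⟨by linarith [hθ.1, pi_pos], hθ.2.le⟩))) (by positivity)
  simp only [add_sub_cancel_left, smul_eq_mul, sin_zero, sin_pi_div_two, ne_eq,
    OfNat.ofNat_ne_zero, not_false_eq_true, zero_pow, one_pow, mul_zero, mul_one, add_zero,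
    add_sub_cancel] at hsubst
  rw [intervalIntegral.integral_of_le hvE.le, ← integral_Icc_eq_integral_Ioc, ← hsubst,
    integral_Icc_eq_integral_Ioo, ← intervalIntegral.integral_const_mul,
    intervalIntegral.integral_of_le (by positivity), integral_Ioc_eq_integral_Ioo]
  refine setIntegral_congr_fun measurableSet_Ioo fun θ hθ => ?_
  have hsin : 0 < sin θ := sin_pos_of_pos_of_lt_pi hθ.1 (by linarith [hθ.2, pi_pos])
  have hcos : 0 < cos θ := cos_pos_of_mem_Ioo ⟨by linarith [hθ.1, pi_pos], hθ.2⟩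
  have h1 : (E - v) * sin θ ^ 2 / v = (E - v) / v * sin θ ^ 2 := by ring
  have h2 : E - (v + (E - v) * sin θ ^ 2) = (E - v) * cos θ ^ 2 := by rw [cos_sq']; ring
  have hr : 0 < √(E - v) := sqrt_pos.2 (by linarith)
  rw [h1, h2, sqrt_mul (by positivity), sqrt_mul (by linarith), sqrt_sq hsin.le, sqrt_sq hcos.le]
  field_simp
  rw [sq_sqrt (by linarith)]

theorem integral_arctan_sqrt_div_sqrt_sub {v E : ℝ} (hv : 0 < v) (hvE : v ≤ E) :
    ∫ u in v..E, arctan (√((u - v) / v)) / √(E - u) = π * (√E - √v) := by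
  rcases hvE.eq_or_lt with rfl | hvE
  · simp
  rw [integral_arctan_sqrt_div_sqrt_sub_eq_integral_arctan_mul_sin_mul_sin hv hvE,
    integral_arctan_mul_sin_mul_sin]
  have hsE : 0 < √E := sqrt_pos.2 (by linarith)
  have hsv : 0 < √v := sqrt_pos.2 hv
  have hc : 1 + √((E - v) / v) ^ 2 = (√E / √v) ^ 2 := by
    rw [sq_sqrt (by positivity), div_pow, sq_sqrt hv.le, sq_sqrt (by linarith)]
    field_simp
    ring
  rw [hc, sqrt_sq (by positivity), sqrt_div' _ hv.le]
  field_simp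
  linear_combination sq_sqrt (by linarith : 0 ≤ E - v) - sq_sqrt (by linarith : 0 ≤ E)
    + sq_sqrt hv.le

theorem integral_inv_mul_arctan_sqrt_mul_div_sqrt_sub {v E : ℝ} (hv : 0 < v) (hvE : v ≤ E)
    (x : ℝ) :
    ∫ u in v..E, 1 / v * arctan (√((u - v) / v)) * x / √(E - u)
      = π * ((√E / √v - 1) * x / √v) := by
  calc ∫ u in v..E, 1 / v * arctan (√((u - v) / v)) * x / √(E - u)
      = ∫ u in v..E, x / v * (arctan (√((u - v) / v)) / √(E - u)) :=
        intervalIntegral.integral_congr fun u _ => by ring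
    _ = π * ((√E / √v - 1) * x / √v) := by
      rw [intervalIntegral.integral_const_mul, integral_arctan_sqrt_div_sqrt_sub hv hvE]
      have := sqrt_pos.2 hv
      field_simp
      rw [sq_sqrt hv.le]

def triangle (a b : ℝ) : Set (ℝ × ℝ) := {p | a ≤ p.2 ∧ p.2 ≤ p.1 ∧ p.1 ≤ b}

section Triangle

variable {a b : ℝ}

theorem triangle_subset_Icc_prod_Icc : triangle a b ⊆ Icc a b ×ˢ Icc a b :=
  fun _ ⟨h₁, h₂, h₃⟩ => ⟨⟨h₁.trans h₂, h₃⟩, ⟨h₁, h₂.trans h₃⟩⟩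

theorem isCompact_triangle : IsCompact (triangle a b) :=
  (isCompact_Icc.prod isCompact_Icc).of_isClosed_subset
    ((isClosed_le continuous_const continuous_snd).inter ((isClosed_le continuous_snd
      continuous_fst).inter (isClosed_le continuous_fst continuous_const)))
    triangle_subset_Icc_prod_Icc

theorem indicator_triangle_eq_left (F : ℝ → ℝ → ℝ) (u v : ℝ) :
    (triangle a b).indicator (uncurry F) (u, v)
      = (Icc a b).indicator (fun u => (Icc a u).indicator (F u) v) u := by
  simp only [indicator_apply, triangle, mem_Icc, uncurry_apply_pair]
  split_ifs <;> grind

theorem indicator_triangle_eq_right (F : ℝ → ℝ → ℝ) (u v : ℝ) :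
    (triangle a b).indicator (uncurry F) (u, v)
      = (Icc a b).indicator (fun v => (Icc v b).indicator (F · v) u) v := by
  simp only [indicator_apply, triangle, mem_Icc, uncurry_apply_pair]
  split_ifs <;> grind

theorem integral_indicator_triangle_left (F : ℝ → ℝ → ℝ) (u : ℝ) :
    ∫ v, (triangle a b).indicator (uncurry F) (u, v)
      = (Icc a b).indicator (fun u => ∫ v in a..u, F u v) u := by
  simp only [indicator_triangle_eq_left]
  by_cases hu : u ∈ Icc a b
  · simp [hu, integral_indicator measurableSet_Icc, integral_Icc_eq_integral_Ioc,
      intervalIntegral.integral_of_le hu.1]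
  · simp [hu]

theorem integral_indicator_triangle_right (F : ℝ → ℝ → ℝ) (v : ℝ) :
    ∫ u, (triangle a b).indicator (uncurry F) (u, v)
      = (Icc a b).indicator (fun v => ∫ u in v..b, F u v) v := by
  simp only [indicator_triangle_eq_right]
  by_cases hv : v ∈ Icc a b
  · simp [hv, integral_indicator measurableSet_Icc, integral_Icc_eq_integral_Ioc,
      intervalIntegral.integral_of_le hv.2]
  · simp [hv]

theorem integral_integral_triangle_swap (hab : a ≤ b) {F : ℝ → ℝ → ℝ}
    (hF : IntegrableOn (uncurry F) (triangle a b)) :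
    IntervalIntegrable (fun u => ∫ v in a..u, F u v) volume a b ∧
      ∫ u in a..b, ∫ v in a..u, F u v = ∫ v in a..b, ∫ u in v..b, F u v := by
  have hint : Integrable ((triangle a b).indicator (uncurry F)) (volume.prod volume) :=
    (integrable_indicator_iff isCompact_triangle.measurableSet).2 hF
  have hleft := hint.integral_prod_left
  simp only [integral_indicator_triangle_left] at hleft
  refine ⟨(intervalIntegrable_iff_integrableOn_Icc_of_le hab).2
    ((integrable_indicator_iff measurableSet_Icc).1 hleft), ?_⟩
  have hswap := integral_integral_swap
    (f := fun u v => (triangle a b).indicator (uncurry F) (u, v)) hint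
  simp only [integral_indicator_triangle_left, integral_indicator_triangle_right,
    integral_indicator measurableSet_Icc, integral_Icc_eq_integral_Ioc] at hswap
  rwa [intervalIntegral.integral_of_le hab, intervalIntegral.integral_of_le hab]

theorem IntegrableOn.comp_fst_triangle {h : ℝ → ℝ} (hh : IntegrableOn h (Icc a b)) :
    IntegrableOn (fun p : ℝ × ℝ => h p.1) (triangle a b) := by
  have : IntegrableOn (fun p : ℝ × ℝ => h p.1) (Icc a b ×ˢ Icc a b) := by
    rw [IntegrableOn, Measure.volume_eq_prod, ← Measure.prod_restrict]
    exact hh.comp_fst _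
  exact this.mono_set triangle_subset_Icc_prod_Icc

end Triangle

theorem integrableOn_inv_sqrt_sub (a b : ℝ) : IntegrableOn (fun u => (√(b - u))⁻¹) (Icc a b) := by
  rcases le_or_gt a b with hab | hab
  · have := (intervalIntegral.intervalIntegrable_rpow' (a := b - a) (b := 0) (r := -(1 / 2))
      (by norm_num)).comp_sub_left b
    rw [sub_sub_cancel, sub_zero, intervalIntegrable_iff_integrableOn_Icc_of_le hab] at this
    refine this.congr_fun (fun u hu => ?_) measurableSet_Icc
    rw [sqrt_eq_rpow, ← rpow_neg (sub_nonneg.2 hu.2)]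
  · simp [Icc_eq_empty_of_lt hab]

theorem continuousOn_triangle_inv_mul_arctan_sqrt_mul {a b : ℝ} (ha : 0 < a) {Ψ : ℝ → ℝ}
    (hΨ : ContinuousOn Ψ (Icc a b)) :
    ContinuousOn (fun p : ℝ × ℝ => 1 / p.2 * arctan (√((p.1 - p.2) / p.2)) * Ψ p.2)
      (triangle a b) := by
  have hΨ' : ContinuousOn (fun p : ℝ × ℝ => Ψ p.2) (triangle a b) :=
    hΨ.comp continuousOn_snd fun p ⟨h₁, h₂, h₃⟩ => ⟨h₁, h₂.trans h₃⟩
  have hne : ∀ p ∈ triangle a b, p.2 ≠ 0 := fun p hp => (ha.trans_le hp.1).ne'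
  exact ContinuousOn.mul (by fun_prop (disch := assumption)) hΨ'

/-- Collapse of the double integral `I₄`:
`24 ∫_{E₀}^E (E−u)^{−1/2} ∫_{E₀}^u v⁻¹ arctan(√((u−v)/v)) Ψ(v) dv du
  = 24π ∫_{E₀}^E (√E/√v − 1) Ψ(v) v^{−1/2} dv`, all integrals converging. -/
theorem collapse_I4 (E₀ E : ℝ) (hE₀ : 0 < E₀) (hE : E₀ < E)
    (Ψ : ℝ → ℝ) (hΨ : ContinuousOn Ψ (Icc E₀ E)) :
    (∀ u ∈ Ioc E₀ E,
      IntervalIntegrable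
        (fun v => (1/v) * Real.arctan (Real.sqrt ((u - v) / v)) * Ψ v) volume E₀ u) ∧
    IntervalIntegrable
      (fun u => (∫ v in E₀..u, (1/v) * Real.arctan (Real.sqrt ((u - v) / v)) * Ψ v) /
        Real.sqrt (E - u)) volume E₀ E ∧
    IntervalIntegrable
      (fun v => (Real.sqrt E / Real.sqrt v - 1) * Ψ v / Real.sqrt v) volume E₀ E ∧
    (24 * ∫ u in E₀..E,
        (∫ v in E₀..u, (1/v) * Real.arctan (Real.sqrt ((u - v) / v)) * Ψ v) /
          Real.sqrt (E - u))
      = 24 * π * ∫ v in E₀..E, (Real.sqrt E / Real.sqrt v - 1) * Ψ v / Real.sqrt v := by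
  have hG := continuousOn_triangle_inv_mul_arctan_sqrt_mul hE₀ hΨ
  have hF : IntegrableOn
      (uncurry fun u v => 1 / v * arctan (√((u - v) / v)) * Ψ v / √(E - u)) (triangle E₀ E) :=
    ((IntegrableOn.comp_fst_triangle (integrableOn_inv_sqrt_sub E₀ E)).mul_continuousOn hG
      isCompact_triangle).congr_fun (fun p _ => (div_eq_inv_mul _ _).symm)
      isCompact_triangle.measurableSet
  obtain ⟨hint, hswap⟩ := integral_integral_triangle_swap hE.le hF
  simp only [intervalIntegral.integral_div] at hint hswap
  refine ⟨fun u hu => ?_, hint, ?_, ?_⟩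
  · exact ContinuousOn.intervalIntegrable_of_Icc hu.1.le
      (hG.comp (Continuous.prodMk_right u).continuousOn fun v hv => ⟨hv.1, hv.2, hu.2⟩)
  · have hne : ∀ v ∈ Icc E₀ E, √v ≠ 0 := fun v hv => (sqrt_pos.2 (hE₀.trans_le hv.1)).ne'
    exact ContinuousOn.intervalIntegrable_of_Icc hE.le (by fun_prop (disch := assumption))
  rw [hswap, mul_assoc, ← intervalIntegral.integral_const_mul π]
  congr 1
  refine intervalIntegral.integral_congr fun v hv => ?_
  rw [uIcc_of_le hE.le] at hv
  exact integral_inv_mul_arctan_sqrt_mul_div_sqrt_sub (hE₀.trans_le hv.1) hv.2 (Ψ v)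
end

section
/- Third-derivative cascade for I₄: let 0 < E₀ and let Ψ be three times continuously differentiable on [E₀, ∞). Define I₄(E) = 24π ∫_{E₀}^{E} ( √E/√v − 1 ) Ψ(v) v^{−1/2} dv. Then the function z ↦ I₄(z²) is three times differentiable on (√E₀, ∞) and (2/π) (d³/dz³) I₄(z²) = 192 Ψ′(z²) − 96 Ψ(z²)/z². Moreover, the first two derivatives satisfy (2/π)(d/dz) I₄(z²) = 48 ∫_{E₀}^{z²} Ψ(v)/v dv and (2/π)(d²/dz²) I₄(z²) = 96 Ψ(z²)/z. -/
/-!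
Splitting the kernel `√E/√v − 1` writes `I₄(z²) = 24π (z A(z²) − B(z²))` with
`A(u) = ∫_{E₀}^u Ψ(v)/v dv` and `B(u) = ∫_{E₀}^u Ψ(v)/√v dv`. By the fundamental theorem
of calculus the two boundary terms produced by differentiating in `z` cancel, leaving
`d/dz I₄(z²) = 24π A(z²)`; two further differentiations are elementary.
-/

open Set Real Filter Topology

section

variable {𝕜 F : Type*} [NontriviallyNormedField 𝕜] [NormedAddCommGroup F] [NormedSpace 𝕜 F]

theorem hasDerivAt_deriv_of_isOpen {f g : 𝕜 → F} {g' : F} {s : Set 𝕜} {x : 𝕜}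
    (hs : IsOpen s) (hx : x ∈ s) (hf : ∀ y ∈ s, HasDerivAt f (g y) y)
    (hg : HasDerivAt g g' x) : HasDerivAt (deriv f) g' x :=
  hg.congr_of_eventuallyEq <| eventuallyEq_of_mem (hs.mem_nhds hx) fun y hy => (hf y hy).deriv

end

theorem hasDerivAt_integral_of_continuousOn_Ici {f : ℝ → ℝ} {a x : ℝ}
    (hf : ContinuousOn f (Ici a)) (hx : a < x) :
    HasDerivAt (fun u => ∫ v in a..u, f v) (f x) x :=
  intervalIntegral.integral_hasDerivAt_right
    ((hf.mono Icc_subset_Ici_self).intervalIntegrable_of_Icc hx.le)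
    ((hf.mono Ioi_subset_Ici_self).stronglyMeasurableAtFilter isOpen_Ioi x hx)
    (hf.continuousAt (Ici_mem_nhds hx))

theorem HasDerivAt.comp_sq {f : ℝ → ℝ} {f' z : ℝ} (hf : HasDerivAt f f' (z ^ 2)) :
    HasDerivAt (fun z => f (z ^ 2)) (f' * (2 * z)) z := by
  have hsq : HasDerivAt (fun z : ℝ => z ^ 2) (2 * z) z := by
    simpa using hasDerivAt_pow 2 z
  exact HasDerivAt.comp (h := fun z : ℝ => z ^ 2) z hf hsq

theorem hasDerivAt_integral_sq {f : ℝ → ℝ} {a z : ℝ}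
    (hf : ContinuousOn f (Ici a)) (hz : a < z ^ 2) :
    HasDerivAt (fun z => ∫ v in a..z ^ 2, f v) (f (z ^ 2) * (2 * z)) z :=
  (hasDerivAt_integral_of_continuousOn_Ici hf hz).comp_sq

section AbelKernel

variable {a : ℝ} {Ψ : ℝ → ℝ}

theorem integral_abelKernel_eq (ha : 0 < a) {e : ℝ} (he : a ≤ e)
    (hΨ : ContinuousOn Ψ (Icc a e)) :
    ∫ v in a..e, (√e / √v - 1) * Ψ v / √v =
      √e * (∫ v in a..e, Ψ v / v) - ∫ v in a..e, Ψ v / √v := by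
  have hpos : ∀ v ∈ Icc a e, 0 < v := fun v hv => ha.trans_le hv.1
  have hA : IntervalIntegrable (fun v => √e * (Ψ v / v)) MeasureTheory.volume a e :=
    (continuousOn_const.mul (hΨ.div continuousOn_id fun v hv => (hpos v hv).ne'))
      |>.intervalIntegrable_of_Icc he
  have hB : IntervalIntegrable (fun v => Ψ v / √v) MeasureTheory.volume a e :=
    (hΨ.div continuous_sqrt.continuousOn fun v hv => (sqrt_pos.2 (hpos v hv)).ne')
      |>.intervalIntegrable_of_Icc he
  rw [← intervalIntegral.integral_const_mul, ← intervalIntegral.integral_sub hA hB]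
  refine intervalIntegral.integral_congr fun v hv => ?_
  rw [uIcc_of_le he] at hv
  have hv' := hpos v hv
  have hsv : √v * √v = v := mul_self_sqrt hv'.le
  have : √v ≠ 0 := (sqrt_pos.2 hv').ne'
  field_simp
  linear_combination (-(√e * Ψ v)) * hsv

theorem hasDerivAt_integral_div_self_sq (ha : 0 < a) (hΨ : ContinuousOn Ψ (Ici a)) {z : ℝ}
    (hz : a < z ^ 2) :
    HasDerivAt (fun z => ∫ v in a..z ^ 2, Ψ v / v) (2 * (Ψ (z ^ 2) / z)) z := by
  have hz0 : z ≠ 0 := by rintro rfl; norm_num at hz; linarith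
  refine (hasDerivAt_integral_sq (f := fun v => Ψ v / v)
    (hΨ.div continuousOn_id fun v hv => (ha.trans_le hv).ne') hz).congr_deriv ?_
  field_simp

theorem hasDerivAt_integral_abelKernel_sq (ha : 0 < a) (hΨ : ContinuousOn Ψ (Ici a))
    {z : ℝ} (hz : √a < z) :
    HasDerivAt (fun z => ∫ v in a..z ^ 2, (√(z ^ 2) / √v - 1) * Ψ v / √v)
      (∫ v in a..z ^ 2, Ψ v / v) z := by
  have hz0 : 0 < z := (sqrt_nonneg a).trans_lt hz
  have hz2 : a < z ^ 2 := (sqrt_lt' hz0).1 hz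
  have hsplit : (fun z => ∫ v in a..z ^ 2, (√(z ^ 2) / √v - 1) * Ψ v / √v) =ᶠ[𝓝 z]
      fun z => z * (∫ v in a..z ^ 2, Ψ v / v) - ∫ v in a..z ^ 2, Ψ v / √v := by
    filter_upwards [Ioi_mem_nhds hz] with y hy
    have hy0 : 0 < y := (sqrt_nonneg a).trans_lt hy
    rw [integral_abelKernel_eq ha ((sqrt_lt' hy0).1 hy).le (hΨ.mono Icc_subset_Ici_self),
      sqrt_sq hy0.le]
  have hA := hasDerivAt_integral_div_self_sq ha hΨ hz2
  have hB := hasDerivAt_integral_sq (f := fun v => Ψ v / √v)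
    (hΨ.div continuous_sqrt.continuousOn fun v hv => (sqrt_pos.2 (ha.trans_le hv)).ne') hz2
  refine (((hasDerivAt_id' z).mul hA).sub hB).congr_of_eventuallyEq hsplit |>.congr_deriv ?_
  rw [sqrt_sq hz0.le]
  field_simp
  ring

end AbelKernel

theorem HasDerivAt.comp_sq_div_self {Ψ : ℝ → ℝ} {d z : ℝ} (hΨ : HasDerivAt Ψ d (z ^ 2))
    (hz : z ≠ 0) :
    HasDerivAt (fun z => Ψ (z ^ 2) / z) (2 * d - Ψ (z ^ 2) / z ^ 2) z := by
  refine (hΨ.comp_sq.div (hasDerivAt_id' z) hz).congr_deriv ?_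
  field_simp

theorem cascade_I4_general (E₀ : ℝ) (hE₀ : 0 < E₀)
    (Ψ Ψ' : ℝ → ℝ)
    (h1 : ∀ v ∈ Ici E₀, HasDerivWithinAt Ψ (Ψ' v) (Ici E₀) v)
    (I₄ : ℝ → ℝ)
    (hI : ∀ e, I₄ e =
      24 * π * ∫ v in E₀..e, (Real.sqrt e / Real.sqrt v - 1) * Ψ v / Real.sqrt v) :
    (∀ z ∈ Ioi (Real.sqrt E₀),
      DifferentiableAt ℝ (fun z => I₄ (z^2)) z ∧
      DifferentiableAt ℝ (deriv (fun z => I₄ (z^2))) z ∧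
      DifferentiableAt ℝ (deriv (deriv (fun z => I₄ (z^2)))) z) ∧
    (∀ z ∈ Ioi (Real.sqrt E₀),
      (2/π) * deriv (deriv (deriv (fun z => I₄ (z^2)))) z =
        192 * Ψ' (z^2) - 96 * Ψ (z^2) / z^2) ∧
    (∀ z ∈ Ioi (Real.sqrt E₀),
      (2/π) * deriv (fun z => I₄ (z^2)) z = 48 * ∫ v in E₀..z^2, Ψ v / v) ∧
    (∀ z ∈ Ioi (Real.sqrt E₀),
      (2/π) * deriv (deriv (fun z => I₄ (z^2))) z = 96 * Ψ (z^2) / z) := by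
  have hΨ : ContinuousOn Ψ (Ici E₀) := fun v hv => (h1 v hv).continuousWithinAt
  have hz0 : ∀ z ∈ Ioi √E₀, 0 < z := fun z hz => (sqrt_nonneg E₀).trans_lt hz
  have hz2 : ∀ z ∈ Ioi √E₀, E₀ < z ^ 2 := fun z hz => (sqrt_lt' (hz0 z hz)).1 hz
  have d1 : ∀ z ∈ Ioi √E₀, HasDerivAt (fun z => I₄ (z ^ 2))
      (24 * π * ∫ v in E₀..z ^ 2, Ψ v / v) z := fun z hz => by
    simpa only [hI] using (hasDerivAt_integral_abelKernel_sq hE₀ hΨ hz).const_mul (24 * π)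
  have d2 : ∀ z ∈ Ioi √E₀, HasDerivAt (deriv fun z => I₄ (z ^ 2))
      (24 * π * (2 * (Ψ (z ^ 2) / z))) z := fun z hz =>
    hasDerivAt_deriv_of_isOpen isOpen_Ioi hz d1 <|
      (hasDerivAt_integral_div_self_sq hE₀ hΨ (hz2 z hz)).const_mul _
  have d3 : ∀ z ∈ Ioi √E₀, HasDerivAt (deriv (deriv fun z => I₄ (z ^ 2)))
      (24 * π * (2 * (2 * Ψ' (z ^ 2) - Ψ (z ^ 2) / z ^ 2))) z := fun z hz =>
    have hΨ' := (h1 _ (hz2 z hz).le).hasDerivAt (Ici_mem_nhds (hz2 z hz))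
    hasDerivAt_deriv_of_isOpen isOpen_Ioi hz d2 <|
      ((hΨ'.comp_sq_div_self (hz0 z hz).ne').const_mul 2).const_mul _
  refine ⟨fun z hz => ⟨(d1 z hz).differentiableAt, (d2 z hz).differentiableAt,
    (d3 z hz).differentiableAt⟩, fun z hz => ?_, fun z hz => ?_, fun z hz => ?_⟩
  · rw [(d3 z hz).deriv]; field_simp; ring
  · rw [(d1 z hz).deriv]; field_simp; ring
  · rw [(d2 z hz).deriv]; field_simp [(hz0 z hz).ne']; ring

/-- Third-derivative cascade for `I₄`:
with `I₄(E) = 24π ∫_{E₀}^E (√E/√v − 1) Ψ(v) v^{−1/2} dv`, the function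
`z ↦ I₄(z²)` is three times differentiable on `(√E₀, ∞)` with
`(2/π) d³/dz³ I₄(z²) = 192 Ψ′(z²) − 96 Ψ(z²)/z²`, and moreover
`(2/π) d/dz I₄(z²) = 48 ∫_{E₀}^{z²} Ψ(v)/v dv` and
`(2/π) d²/dz² I₄(z²) = 96 Ψ(z²)/z`. -/
theorem cascade_I4 (E₀ : ℝ) (hE₀ : 0 < E₀)
    (Ψ Ψ' Ψ'' Ψ''' : ℝ → ℝ)
    (h1 : ∀ v ∈ Ici E₀, HasDerivWithinAt Ψ (Ψ' v) (Ici E₀) v)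
    (h2 : ∀ v ∈ Ici E₀, HasDerivWithinAt Ψ' (Ψ'' v) (Ici E₀) v)
    (h3 : ∀ v ∈ Ici E₀, HasDerivWithinAt Ψ'' (Ψ''' v) (Ici E₀) v)
    (hc : ContinuousOn Ψ''' (Ici E₀))
    (I₄ : ℝ → ℝ)
    (hI : ∀ e, I₄ e =
      24 * π * ∫ v in E₀..e, (Real.sqrt e / Real.sqrt v - 1) * Ψ v / Real.sqrt v) :
    (∀ z ∈ Ioi (Real.sqrt E₀),
      DifferentiableAt ℝ (fun z => I₄ (z^2)) z ∧
      DifferentiableAt ℝ (deriv (fun z => I₄ (z^2))) z ∧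
      DifferentiableAt ℝ (deriv (deriv (fun z => I₄ (z^2)))) z) ∧
    (∀ z ∈ Ioi (Real.sqrt E₀),
      (2/π) * deriv (deriv (deriv (fun z => I₄ (z^2)))) z =
        192 * Ψ' (z^2) - 96 * Ψ (z^2) / z^2) ∧
    (∀ z ∈ Ioi (Real.sqrt E₀),
      (2/π) * deriv (fun z => I₄ (z^2)) z = 48 * ∫ v in E₀..z^2, Ψ v / v) ∧
    (∀ z ∈ Ioi (Real.sqrt E₀),
      (2/π) * deriv (deriv (fun z => I₄ (z^2))) z = 96 * Ψ (z^2) / z) :=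
  cascade_I4_general E₀ hE₀ Ψ Ψ' h1 I₄ hI
end
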